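/- Let p ∈ (0,1], s ≥ 1, and S ⊆ {1,…,n} with |S| = s. Let x⊥ ∈ ℂⁿ with supp(x⊥) ⊆ S, and let x, x' ∈ ℂⁿ satisfy ‖x‖_p^p ≤ ‖x⊥‖_p^p and ‖x'‖_p^p ≤ ‖x⊥‖_p^p. Set d = x − x⊥ and d' = x' − x⊥. Let A ∈ ℂ^{m×n} satisfy β‖v‖₂² ≤ ‖Av‖₂² ≤ α‖v‖₂² for every 3s-sparse v, with 0 < β ≤ α, and suppose η > 0 satisfies |η(α+β)/2 − 1| ≤ τ for some τ ≥ 0. Then, with ρ = (α−β)/(α+β), Re[⟨d, d'⟩ − η⟨Ad, Ad'⟩] ≤ ((1+τ)ρ + τ)·(1 + √(2p)·(2/(2−p))^{1/2−1/p})²·‖d‖₂·‖d'‖₂. -/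

import Mathlib

open scoped Classical

noncomputable def l2norm {n : ℕ} (v : Fin n → ℂ) : ℝ :=
  Real.sqrt (∑ i, ‖v i‖ ^ 2)

noncomputable def l1norm {n : ℕ} (v : Fin n → ℂ) : ℝ :=
  ∑ i, ‖v i‖

noncomputable def lpPow {n : ℕ} (p : ℝ) (v : Fin n → ℂ) : ℝ :=
  ∑ i, ‖v i‖ ^ p

noncomputable def lpnorm {n : ℕ} (p : ℝ) (v : Fin n → ℂ) : ℝ :=
  (∑ i, ‖v i‖ ^ p) ^ (1/p)

noncomputable def Fball {n : ℕ} (p c : ℝ) : Set (Fin n → ℂ) :=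
  {x | ∑ i, ‖x i‖ ^ p ≤ c}

def IsProj {n : ℕ} (p c : ℝ) (x xp : Fin n → ℂ) : Prop :=
  xp ∈ Fball p c ∧ ∀ u ∈ Fball p c, l2norm (x - xp) ≤ l2norm (x - u)

def Sparse {n : ℕ} (t : ℕ) (v : Fin n → ℂ) : Prop :=
  (Finset.univ.filter fun i => v i ≠ 0).card ≤ t

noncomputable def herm {n : ℕ} (u v : Fin n → ℂ) : ℂ :=
  ∑ i, (starRingEnd ℂ) (u i) * v i

noncomputable def restrict {n : ℕ} (I : Finset (Fin n)) (d : Fin n → ℂ) : Fin n → ℂ :=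
  fun i => if i ∈ I then d i else 0

/-!
Split `Sᶜ` into blocks `T₀, T₁, …` of `s` coordinates each, taken in order of decreasing `|dᵢ|`,
and let `a_k = ‖d_{T_k}‖_p^p`. Each `|dᵢ|^p` with `i ∈ T_{k+1}` is at most the mean `a_k / s` of
the previous block, so `‖d_{T_{k+1}}‖₂ ≤ s^{-(2-p)/(2p)} a_k^{(2-p)/(2p)} a_{k+1}^{1/2}`.
Cauchy–Schwarz and a weighted AM–GM inequality bound the sum of these by
`γ s^{-(2-p)/(2p)} (Σ a_k)^{1/p}` with `γ = √(2p) (2/(2-p))^{1/2-1/p}`, and feasibility of `x`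
(with the `p`-triangle inequality) gives `Σ a_k ≤ ‖d_S‖_p^p ≤ s^{1-p/2} ‖d_S‖₂^p`; hence
`Σ_{k ≥ 1} ‖d_{T_k}‖₂ ≤ γ ‖d‖₂`.

Writing `d = d_{S ∪ T₀} + Σ_{k ≥ 1} d_{T_k}` and similarly for `d'`, every pair of pieces lives
on at most `3s` coordinates. There the RIP makes `|‖w‖² - η ‖A w‖²| ≤ ((1 + τ) ρ + τ) ‖w‖²`, which
polarizes to the bilinear bound for the pair; summing over all pairs yields the factor `(1 + γ)²`.
-/

open Finset hiding restrict

noncomputable def tailConst (p : ℝ) : ℝ :=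
  √(2 * p) * (2 / (2 - p)) ^ ((1 : ℝ) / 2 - 1 / p)

section RealInequalities

variable {p : ℝ}

theorem abs_sub_mul_le_of_bounds {α β η τ r q : ℝ} (hβ : 0 < β) (hβα : β ≤ α) (hη : 0 ≤ η)
    (hητ : |η * (α + β) / 2 - 1| ≤ τ) (hr : 0 ≤ r) (hlo : β * r ≤ q) (hhi : q ≤ α * r) :
    |r - η * q| ≤ ((1 + τ) * ((α - β) / (α + β)) + τ) * r := by
  set c := η * (α + β) / 2
  set ρ := (α - β) / (α + β)
  have hαβ : 0 < α + β := by linarith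
  -- `η α = c (1 + ρ)` and `η β = c (1 - ρ)`, so `|1 - η α|, |1 - η β| ≤ |1 - c| + c ρ`
  have hcα : η * α = c * (1 + ρ) := by simp only [c, ρ]; field_simp; ring
  have hcβ : η * β = c * (1 - ρ) := by simp only [c, ρ]; field_simp; ring
  have hρ : 0 ≤ ρ := div_nonneg (by linarith) hαβ.le
  obtain ⟨hc₁, hc₂⟩ := abs_le.1 hητ
  have hcρ : c * ρ ≤ (1 + τ) * ρ := mul_le_mul_of_nonneg_right (by linarith) hρ
  have hηq₁ : η * (β * r) ≤ η * q := mul_le_mul_of_nonneg_left hlo hη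
  have hηq₂ : η * q ≤ η * (α * r) := mul_le_mul_of_nonneg_left hhi hη
  rw [abs_le]
  constructor <;> nlinarith

theorem rpow_one_sub_mul_rpow_le {a b : ℝ} (hp0 : 0 < p) (hp1 : p ≤ 1) (ha : 0 ≤ a) (hb : 0 ≤ b) :
    a ^ (1 - p) * b ^ p ≤ (1 - p) ^ (1 - p) * p ^ p * (a + b) := by
  rcases hp1.lt_or_eq with hp1 | rfl
  · have h1p : 0 < 1 - p := by linarith
    have amgm := Real.geom_mean_le_arith_mean2_weighted h1p.le hp0.le
      (div_nonneg ha h1p.le) (div_nonneg hb hp0.le) (sub_add_cancel 1 p)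
    rw [Real.div_rpow ha h1p.le, Real.div_rpow hb hp0.le,
      mul_div_cancel₀ _ h1p.ne', mul_div_cancel₀ _ hp0.ne'] at amgm
    calc a ^ (1 - p) * b ^ p
        = (1 - p) ^ (1 - p) * p ^ p * (a ^ (1 - p) / (1 - p) ^ (1 - p) * (b ^ p / p ^ p)) := by
          field_simp
      _ ≤ (1 - p) ^ (1 - p) * p ^ p * (a + b) := by gcongr
  · simp only [sub_self, Real.rpow_zero, Real.rpow_one, one_mul]
    linarith

theorem tailConst_nonneg (hp1 : p ≤ 1) : 0 ≤ tailConst p := by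
  have : 0 < 2 - p := by linarith
  unfold tailConst; positivity

theorem tailConst_rpow (hp0 : 0 < p) (hp1 : p ≤ 1) :
    tailConst p ^ (2 * p) = (2 * p) ^ p * ((2 - p) / 2) ^ (2 - p) := by
  have h2p : 0 < 2 / (2 - p) := div_pos two_pos (by linarith)
  rw [tailConst, Real.mul_rpow (by positivity) (by positivity), Real.sqrt_eq_rpow,
    ← Real.rpow_mul (by positivity), ← Real.rpow_mul h2p.le,
    show 1 / 2 * (2 * p) = p by ring, show (1 / 2 - 1 / p) * (2 * p) = -(2 - p) by field_simp; ring,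
    Real.rpow_neg h2p.le, ← Real.inv_rpow h2p.le, inv_div]

theorem one_sub_rpow_mul_rpow_le_tailConst_rpow (hp0 : 0 < p) (hp1 : p ≤ 1) :
    (1 - p) ^ (1 - p) * p ^ p ≤ tailConst p ^ (2 * p) := by
  rw [tailConst_rpow hp0 hp1]
  have h2p : 0 < 2 - p := by linarith
  have h1p : 0 ≤ 1 - p := by linarith
  have key : (4 * (1 - p)) ^ (1 - p) ≤ (2 - p) ^ (2 - p) := by
    calc (4 * (1 - p)) ^ (1 - p) ≤ ((2 - p) ^ 2) ^ (1 - p) :=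
          Real.rpow_le_rpow (by linarith) (by nlinarith) h1p
      _ = (2 - p) ^ (2 * (1 - p)) := by
          rw [← Real.rpow_natCast, ← Real.rpow_mul h2p.le]; norm_num
      _ ≤ (2 - p) ^ (2 - p) := Real.rpow_le_rpow_of_exponent_le (by linarith) (by linarith)
  have h4 : (4 : ℝ) ^ (1 - p) = 2 ^ (2 - p) / 2 ^ p := by
    rw [← Real.rpow_sub two_pos, show (4 : ℝ) = 2 ^ (2 : ℝ) by norm_num,
      ← Real.rpow_mul two_pos.le]
    ring_nf
  rw [Real.mul_rpow (by norm_num) h1p, h4] at key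
  rw [div_mul_eq_mul_div, div_le_iff₀ (by positivity)] at key
  rw [Real.mul_rpow two_pos.le hp0.le, Real.div_rpow h2p.le two_pos.le]
  calc (1 - p) ^ (1 - p) * p ^ p = (2 ^ (2 - p) * (1 - p) ^ (1 - p)) * p ^ p / 2 ^ (2 - p) := by
        field_simp
    _ ≤ ((2 - p) ^ (2 - p) * 2 ^ p) * p ^ p / 2 ^ (2 - p) := by gcongr
    _ = _ := by field_simp

theorem sqrt_rpow_mul_sub_le (hp0 : 0 < p) (hp1 : p ≤ 1) {a A : ℝ} (ha : 0 ≤ a) (haA : a ≤ A) :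
    √(a ^ ((1 - p) / p) * (A - a)) ≤ tailConst p * √(A ^ (1 / p)) := by
  have hA : 0 ≤ A := ha.trans haA
  have sqrt_rpow : ∀ {u : ℝ}, 0 ≤ u → √u ^ (2 * p) = u ^ p := fun hu => by
    rw [Real.sqrt_eq_rpow, ← Real.rpow_mul hu]; ring_nf
  rw [← Real.rpow_le_rpow_iff (by positivity)
    (mul_nonneg (tailConst_nonneg hp1) (by positivity)) (by positivity : 0 < 2 * p),
    Real.mul_rpow (tailConst_nonneg hp1) (by positivity), sqrt_rpow (by positivity),
    sqrt_rpow (by positivity), ← Real.rpow_mul hA, one_div_mul_cancel hp0.ne', Real.rpow_one,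
    Real.mul_rpow (by positivity) (by linarith), ← Real.rpow_mul ha, div_mul_cancel₀ _ hp0.ne']
  calc a ^ (1 - p) * (A - a) ^ p ≤ (1 - p) ^ (1 - p) * p ^ p * (a + (A - a)) :=
        rpow_one_sub_mul_rpow_le hp0 hp1 ha (by linarith)
    _ ≤ tailConst p ^ (2 * p) * A := by
        rw [add_sub_cancel]
        exact mul_le_mul_of_nonneg_right (one_sub_rpow_mul_rpow_le_tailConst_rpow hp0 hp1) hA

end RealInequalities

section Sums

variable {p : ℝ}

theorem sum_rpow_le_rpow_sum {ι : Type*} (s : Finset ι) {f : ι → ℝ} (hf : ∀ i, 0 ≤ f i)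
    {q : ℝ} (hq : 1 ≤ q) : ∑ i ∈ s, f i ^ q ≤ (∑ i ∈ s, f i) ^ q := by
  induction s using Finset.induction_on with
  | empty => simp [Real.zero_rpow (by linarith : q ≠ 0)]
  | insert i s hi ih =>
    rw [sum_insert hi, sum_insert hi]
    exact (add_le_add le_rfl ih).trans
      (Real.add_rpow_le_rpow_add (hf i) (sum_nonneg fun j _ => hf j) hq)

theorem sum_rpow_mul_sqrt_succ_le (hp0 : 0 < p) (hp1 : p ≤ 1) {a : ℕ → ℝ} (ha : ∀ k, 0 ≤ a k)
    (ha0 : ∀ k, a k ≤ a 0) (N : ℕ) :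
    ∑ k ∈ range N, a k ^ ((2 - p) / (2 * p)) * √(a (k + 1)) ≤
      tailConst p * (∑ k ∈ range (N + 1), a k) ^ (1 / p) := by
  set A := ∑ k ∈ range (N + 1), a k
  have hA : 0 ≤ A := sum_nonneg fun k _ => ha k
  have hsplit : ∀ k, a k ^ ((2 - p) / (2 * p)) * √(a (k + 1)) =
      √(a k ^ (1 / p)) * √(a k ^ ((1 - p) / p) * a (k + 1)) := fun k => by
    rw [← Real.sqrt_mul (Real.rpow_nonneg (ha k) _), ← mul_assoc,
      ← Real.rpow_add' (ha k) (by positivity),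
      Real.sqrt_mul (Real.rpow_nonneg (ha k) _), Real.sqrt_eq_rpow (a k ^ _),
      ← Real.rpow_mul (ha k)]
    ring_nf
  have hfirst : ∑ k ∈ range N, a k ^ (1 / p) ≤ A ^ (1 / p) :=
    (sum_le_sum_of_subset_of_nonneg (range_subset_range.2 N.le_succ)
      fun k _ _ => Real.rpow_nonneg (ha k) _).trans
      (sum_rpow_le_rpow_sum _ ha (by rw [le_div_iff₀ hp0]; linarith))
  have hsecond :
      ∑ k ∈ range N, a k ^ ((1 - p) / p) * a (k + 1) ≤ a 0 ^ ((1 - p) / p) * (A - a 0) := by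
    have hA0 : A - a 0 = ∑ k ∈ range N, a (k + 1) := by
      simp only [A, sum_range_succ']; ring
    rw [hA0, mul_sum]
    exact sum_le_sum fun k _ => mul_le_mul_of_nonneg_right
      (Real.rpow_le_rpow (ha k) (ha0 k) (div_nonneg (by linarith) hp0.le)) (ha _)
  calc ∑ k ∈ range N, a k ^ ((2 - p) / (2 * p)) * √(a (k + 1))
      = ∑ k ∈ range N, √(a k ^ (1 / p)) * √(a k ^ ((1 - p) / p) * a (k + 1)) :=
        sum_congr rfl fun k _ => hsplit k
    _ ≤ √(∑ k ∈ range N, a k ^ (1 / p)) * √(∑ k ∈ range N, a k ^ ((1 - p) / p) * a (k + 1)) :=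
        Real.sum_sqrt_mul_sqrt_le _ (fun k => Real.rpow_nonneg (ha k) _)
          (fun k => mul_nonneg (Real.rpow_nonneg (ha k) _) (ha _))
    _ ≤ √(A ^ (1 / p)) * (tailConst p * √(A ^ (1 / p))) := by
        gcongr
        exact (Real.sqrt_le_sqrt hsecond).trans (sqrt_rpow_mul_sub_le hp0 hp1 (ha 0)
          (single_le_sum (fun k _ => ha k) (mem_range.2 N.succ_pos)))
    _ = tailConst p * A ^ (1 / p) := by rw [mul_left_comm, Real.mul_self_sqrt (by positivity)]

theorem sum_sq_le_rpow_mul_sum_rpow {ι : Type*} (T : Finset ι) {g : ι → ℝ} (hg : ∀ i, 0 ≤ g i)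
    (hp0 : 0 < p) (hp2 : p ≤ 2) {M : ℝ} (hM : ∀ i ∈ T, g i ^ p ≤ M) :
    ∑ i ∈ T, g i ^ 2 ≤ M ^ ((2 - p) / p) * ∑ i ∈ T, g i ^ p := by
  rw [mul_sum]
  refine sum_le_sum fun i hi => ?_
  have hsq : g i ^ 2 = (g i ^ p) ^ ((2 - p) / p) * g i ^ p := by
    rw [← Real.rpow_mul (hg i), mul_div_cancel₀ _ hp0.ne', ← Real.rpow_add' (hg i) (by simp),
      sub_add_cancel, Real.rpow_two]
  rw [hsq]
  exact mul_le_mul_of_nonneg_right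
    (Real.rpow_le_rpow (Real.rpow_nonneg (hg i) _) (hM i hi) (div_nonneg (by linarith) hp0.le))
    (Real.rpow_nonneg (hg i) _)

theorem sum_range_mul_eq_sum_sum_Ico {M : Type*} [AddCommMonoid M] (f : ℕ → M) (s N : ℕ) :
    ∑ k ∈ range (N * s), f k = ∑ j ∈ range N, ∑ k ∈ Ico (j * s) (j * s + s), f k := by
  induction N with
  | zero => simp
  | succ N ih =>
    rw [sum_range_succ, ← ih, sum_range_add_sum_Ico _ (by nlinarith), Nat.succ_mul]

theorem sum_sqrt_sum_sq_Ico_le (hp0 : 0 < p) (hp1 : p ≤ 1) {s : ℕ} (hs : 0 < s) {b : ℕ → ℝ}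
    (hb0 : ∀ k, 0 ≤ b k) (hb : Antitone b) (N : ℕ) :
    ∑ j ∈ range N, √(∑ k ∈ Ico ((j + 1) * s) ((j + 1) * s + s), b k ^ 2) ≤
      tailConst p * (∑ k ∈ range ((N + 1) * s), b k ^ p) ^ (1 / p) / s ^ ((2 - p) / (2 * p)) := by
  set a : ℕ → ℝ := fun j => ∑ k ∈ Ico (j * s) (j * s + s), b k ^ p
  have hs' : (0 : ℝ) < s := by exact_mod_cast hs
  have ha : ∀ j, 0 ≤ a j := fun j => sum_nonneg fun k _ => Real.rpow_nonneg (hb0 k) _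
  have hdom : ∀ j, ∀ k ∈ Ico ((j + 1) * s) ((j + 1) * s + s), b k ^ p ≤ a j / s := by
    intro j k hk
    rw [le_div_iff₀ hs', mul_comm]
    calc (s : ℝ) * b k ^ p = ∑ _k' ∈ Ico (j * s) (j * s + s), b k ^ p := by simp
      _ ≤ a j := sum_le_sum fun k' hk' => Real.rpow_le_rpow (hb0 k)
          (hb (by rw [mem_Ico] at hk hk'; rw [Nat.succ_mul] at hk; omega)) hp0.le
  have hanti : Antitone a := antitone_nat_of_succ_le fun j => by
    calc a (j + 1) ≤ ∑ _k ∈ Ico ((j + 1) * s) ((j + 1) * s + s), a j / s := sum_le_sum (hdom j)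
      _ = a j := by simp [field]
  have hblock : ∀ j, √(∑ k ∈ Ico ((j + 1) * s) ((j + 1) * s + s), b k ^ 2) ≤
      a j ^ ((2 - p) / (2 * p)) * √(a (j + 1)) / s ^ ((2 - p) / (2 * p)) := by
    intro j
    calc √(∑ k ∈ Ico ((j + 1) * s) ((j + 1) * s + s), b k ^ 2)
        ≤ √((a j / s) ^ ((2 - p) / p) * a (j + 1)) :=
          Real.sqrt_le_sqrt (sum_sq_le_rpow_mul_sum_rpow _ hb0 hp0 (by linarith) (hdom j))
      _ = a j ^ ((2 - p) / (2 * p)) * √(a (j + 1)) / s ^ ((2 - p) / (2 * p)) := by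
        rw [Real.sqrt_mul (by have := ha j; positivity), Real.sqrt_eq_rpow (_ ^ _),
          ← Real.rpow_mul (by have := ha j; positivity), Real.div_rpow (ha j) hs'.le]
        ring_nf
  calc ∑ j ∈ range N, √(∑ k ∈ Ico ((j + 1) * s) ((j + 1) * s + s), b k ^ 2)
      ≤ (∑ j ∈ range N, a j ^ ((2 - p) / (2 * p)) * √(a (j + 1))) / s ^ ((2 - p) / (2 * p)) := by
        rw [sum_div]; exact sum_le_sum fun j _ => hblock j
    _ ≤ tailConst p * (∑ j ∈ range (N + 1), a j) ^ (1 / p) / s ^ ((2 - p) / (2 * p)) := by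
        gcongr
        exact sum_rpow_mul_sqrt_succ_le hp0 hp1 ha (fun j => hanti j.zero_le) N
    _ = _ := by rw [sum_range_mul_eq_sum_sum_Ico]

theorem rpow_sum_rpow_le_card_rpow_mul_sqrt {ι : Type*} (S : Finset ι) {g : ι → ℝ}
    (hg : ∀ i, 0 ≤ g i) (hp0 : 0 < p) (hp2 : p ≤ 2) :
    (∑ i ∈ S, g i ^ p) ^ (1 / p) ≤ (#S : ℝ) ^ ((2 - p) / (2 * p)) * √(∑ i ∈ S, g i ^ 2) := by
  have hsum : 0 ≤ ∑ i ∈ S, g i ^ p := sum_nonneg fun i _ => Real.rpow_nonneg (hg i) _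
  have hpow := Real.rpow_sum_le_const_mul_sum_rpow_of_nonneg S (p := 2 / p)
    (by rw [le_div_iff₀ hp0]; linarith) fun i _ => Real.rpow_nonneg (hg i) p
  have hsq : ∀ i, (g i ^ p) ^ (2 / p) = g i ^ 2 := fun i => by
    rw [← Real.rpow_mul (hg i), mul_div_cancel₀ _ hp0.ne', Real.rpow_two]
  simp only [hsq] at hpow
  calc (∑ i ∈ S, g i ^ p) ^ (1 / p) = √((∑ i ∈ S, g i ^ p) ^ (2 / p)) := by
        rw [Real.sqrt_eq_rpow, ← Real.rpow_mul hsum]; ring_nf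
    _ ≤ √((#S : ℝ) ^ (2 / p - 1) * ∑ i ∈ S, g i ^ 2) := Real.sqrt_le_sqrt hpow
    _ = (#S : ℝ) ^ ((2 - p) / (2 * p)) * √(∑ i ∈ S, g i ^ 2) := by
        rw [Real.sqrt_mul (by positivity), Real.sqrt_eq_rpow (_ ^ _),
          ← Real.rpow_mul (by positivity)]
        congr 2
        field_simp

end Sums

section Blocks

variable {p : ℝ}

theorem exists_equiv_fin_antitone {ι : Type*} [Fintype ι] (g : ι → ℝ) :
    ∃ e : Fin (Fintype.card ι) ≃ ι, Antitone (g ∘ e) := by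
  let e₀ := (Fintype.equivFin ι).symm
  let f : Fin (Fintype.card ι) → ℝᵒᵈ := fun k => OrderDual.toDual (g (e₀ k))
  exact ⟨(Tuple.sort f).trans e₀, fun k l hkl => Tuple.monotone_sort f hkl⟩

theorem sum_filter_symm_mem_eq_sum_extend {ι : Type*} [Fintype ι] (e : Fin (Fintype.card ι) ≃ ι)
    (g : ι → ℝ) {F : ℝ → ℝ} (hF : F 0 = 0) (P : Finset ℕ) :
    ∑ i with (e.symm i : ℕ) ∈ P, F (g i) = ∑ k ∈ P, F (Function.extend Fin.val (g ∘ e) 0 k) := by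
  set b := Function.extend Fin.val (g ∘ e) 0
  have hb : ∀ k : Fin (Fintype.card ι), b k = g (e k) := fun k =>
    Fin.val_injective.extend_apply _ _ _
  rw [sum_filter, ← e.sum_comp]
  simp only [Equiv.symm_apply_apply, ← hb]
  rw [Fin.sum_univ_eq_sum_range (fun k => if k ∈ P then F (b k) else 0), sum_ite_mem]
  refine sum_subset inter_subset_right fun k hkP hk => ?_
  have : ¬∃ k' : Fin (Fintype.card ι), (k' : ℕ) = k := by
    rintro ⟨k', rfl⟩; exact hk (mem_inter.2 ⟨mem_range.2 k'.2, hkP⟩)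
  simp [b, Function.extend_apply' _ _ _ this, hF]

theorem extend_val_nonneg {n : ℕ} {f : Fin n → ℝ} (hf : ∀ k, 0 ≤ f k) (k : ℕ) :
    0 ≤ Function.extend Fin.val f 0 k := by
  by_cases hk : k < n
  · exact Fin.val_injective.extend_apply f 0 ⟨k, hk⟩ ▸ hf _
  · exact (Function.extend_apply' (f := Fin.val) f 0 k fun ⟨k', hk'⟩ => hk (hk' ▸ k'.2)).ge

theorem antitone_extend_val {n : ℕ} {f : Fin n → ℝ} (hf0 : ∀ k, 0 ≤ f k) (hf : Antitone f) :
    Antitone (Function.extend Fin.val f 0) := fun k l hkl => by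
  by_cases hl : l < n
  · rw [Fin.val_injective.extend_apply f 0 ⟨k, by omega⟩,
      Fin.val_injective.extend_apply f 0 ⟨l, hl⟩]
    exact hf (show (⟨k, _⟩ : Fin n) ≤ ⟨l, hl⟩ from hkl)
  · rw [Function.extend_apply' (f := Fin.val) f 0 l fun ⟨l', hl'⟩ => hl (hl' ▸ l'.2)]
    exact extend_val_nonneg hf0 k

theorem exists_blocks_sum_sqrt_le {ι : Type*} [Fintype ι] (hp0 : 0 < p) (hp1 : p ≤ 1) {s : ℕ}
    (hs : 0 < s) {g : ι → ℝ} (hg : ∀ i, 0 ≤ g i) :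
    ∃ blk : ι → ℕ, (∀ i, blk i < Fintype.card ι) ∧ (∀ j, #{i | blk i = j} ≤ s) ∧
      ∑ j ∈ range (Fintype.card ι), √(∑ i with blk i = j + 1, g i ^ 2) ≤
        tailConst p * (∑ i, g i ^ p) ^ (1 / p) / s ^ ((2 - p) / (2 * p)) := by
  obtain ⟨e, he⟩ := exists_equiv_fin_antitone g
  -- the values of `g` in decreasing order, padded with zeros
  set b := Function.extend Fin.val (g ∘ e) 0
  have hfiber : ∀ j, univ.filter (fun i => (e.symm i : ℕ) / s = j) =
      univ.filter fun i => (e.symm i : ℕ) ∈ Ico (j * s) (j * s + s) := fun j => by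
    ext i; simp only [mem_filter, mem_univ, true_and, mem_Ico, Nat.div_eq_iff hs]; omega
  refine ⟨fun i => (e.symm i : ℕ) / s, fun i => (Nat.div_le_self _ _).trans_lt (e.symm i).2,
    fun j => ?_, ?_⟩
  · dsimp only
    rw [hfiber]
    calc _ ≤ #(Ico (j * s) (j * s + s)) :=
          card_le_card_of_injOn (fun i => (e.symm i : ℕ)) (fun i hi => by simpa using hi)
            fun i _ i' _ h => e.symm.injective (Fin.val_injective h)
      _ = s := by simp
  · have htotal : ∑ i, g i ^ p = ∑ k ∈ range ((Fintype.card ι + 1) * s), b k ^ p := by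
      rw [← sum_filter_symm_mem_eq_sum_extend e g (F := (· ^ p)) (Real.zero_rpow hp0.ne')]
      congr 1; ext i; simp only [mem_univ, mem_filter, mem_range, true_and, true_iff]
      nlinarith [(e.symm i).2]
    dsimp only
    simp only [hfiber, sum_filter_symm_mem_eq_sum_extend e g (F := (· ^ 2)) (zero_pow two_ne_zero),
      htotal]
    exact sum_sqrt_sum_sq_Ico_le hp0 hp1 hs (extend_val_nonneg fun k => hg _)
      (antitone_extend_val (fun k => hg _) he) _

end Blocks

section Vectors

variable {p : ℝ} {n : ℕ}

theorem sum_compl_rpow_norm_sub_le {ι E : Type*} [Fintype ι] [DecidableEq ι]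
    [SeminormedAddCommGroup E] (hp0 : 0 < p) (hp1 : p ≤ 1) {S : Finset ι} {x y : ι → E}
    (hy : ∀ i, y i ≠ 0 → i ∈ S) (hxy : ∑ i, ‖x i‖ ^ p ≤ ∑ i, ‖y i‖ ^ p) :
    ∑ i ∈ Sᶜ, ‖x i - y i‖ ^ p ≤ ∑ i ∈ S, ‖x i - y i‖ ^ p := by
  have hy0 : ∀ i ∈ Sᶜ, y i = 0 := fun i hi => by
    by_contra h; exact mem_compl.1 hi (hy i h)
  have hcompl : ∑ i ∈ Sᶜ, ‖x i - y i‖ ^ p = ∑ i ∈ Sᶜ, ‖x i‖ ^ p :=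
    sum_congr rfl fun i hi => by rw [hy0 i hi, sub_zero]
  have hy_compl : ∑ i ∈ Sᶜ, ‖y i‖ ^ p = 0 :=
    sum_eq_zero fun i hi => by rw [hy0 i hi, norm_zero, Real.zero_rpow hp0.ne']
  have hS : ∑ i ∈ S, ‖y i‖ ^ p ≤ ∑ i ∈ S, ‖x i‖ ^ p + ∑ i ∈ S, ‖x i - y i‖ ^ p := by
    rw [← sum_add_distrib]
    exact sum_le_sum fun i _ =>
      (Real.rpow_le_rpow (norm_nonneg _) (norm_le_insert _ _) hp0.le).trans
        (Real.rpow_add_le_add_rpow (norm_nonneg _) (norm_nonneg _) hp0.le hp1)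
  rw [← sum_add_sum_compl S, ← sum_add_sum_compl S, hy_compl] at hxy
  linarith

theorem l2norm_nonneg (v : Fin n → ℂ) : 0 ≤ l2norm v := Real.sqrt_nonneg _

theorem l2norm_eq_norm (v : Fin n → ℂ) :
    l2norm v = ‖(WithLp.toLp 2 v : EuclideanSpace ℂ (Fin n))‖ := by
  rw [EuclideanSpace.norm_eq, l2norm]

theorem l2norm_restrict (I : Finset (Fin n)) (d : Fin n → ℂ) :
    l2norm (restrict I d) = √(∑ i ∈ I, ‖d i‖ ^ 2) := by
  simp only [l2norm, restrict, apply_ite (fun z : ℂ => ‖z‖ ^ 2), norm_zero, ne_eq,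
    OfNat.ofNat_ne_zero, not_false_eq_true, zero_pow, sum_ite_mem, univ_inter]

theorem sqrt_sum_norm_sq_le_l2norm (I : Finset (Fin n)) (d : Fin n → ℂ) :
    √(∑ i ∈ I, ‖d i‖ ^ 2) ≤ l2norm d :=
  Real.sqrt_le_sqrt (sum_le_sum_of_subset_of_nonneg (subset_univ I) fun _ _ _ => sq_nonneg _)

theorem rpow_sum_compl_le_of_sum_compl_le (hp0 : 0 < p) (hp1 : p ≤ 1) {s : ℕ}
    {S : Finset (Fin n)} (hS : #S ≤ s) {d : Fin n → ℂ}
    (hd : ∑ i ∈ Sᶜ, ‖d i‖ ^ p ≤ ∑ i ∈ S, ‖d i‖ ^ p) :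
    (∑ i ∈ Sᶜ, ‖d i‖ ^ p) ^ (1 / p) ≤ (s : ℝ) ^ ((2 - p) / (2 * p)) * l2norm d := by
  have hexp : 0 ≤ (2 - p) / (2 * p) := div_nonneg (by linarith) (by linarith)
  calc (∑ i ∈ Sᶜ, ‖d i‖ ^ p) ^ (1 / p) ≤ (∑ i ∈ S, ‖d i‖ ^ p) ^ (1 / p) :=
        Real.rpow_le_rpow (sum_nonneg fun i _ => by positivity) hd (by positivity)
    _ ≤ (#S : ℝ) ^ ((2 - p) / (2 * p)) * √(∑ i ∈ S, ‖d i‖ ^ 2) :=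
        rpow_sum_rpow_le_card_rpow_mul_sqrt S (fun i => norm_nonneg _) hp0 (by linarith)
    _ ≤ (s : ℝ) ^ ((2 - p) / (2 * p)) * l2norm d := by
        gcongr
        exact sqrt_sum_norm_sq_le_l2norm S d

theorem exists_sparse_decomposition (hp0 : 0 < p) (hp1 : p ≤ 1) {s : ℕ} (hs : 0 < s)
    {S : Finset (Fin n)} (hS : #S ≤ s) {d : Fin n → ℂ}
    (hd : ∑ i ∈ Sᶜ, ‖d i‖ ^ p ≤ ∑ i ∈ S, ‖d i‖ ^ p) :
    ∃ (T : ℕ → Finset (Fin n)) (u : ℕ → Fin n → ℂ), (∀ j, #(T j) ≤ s) ∧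
      (∀ j i, u j i ≠ 0 → i ∈ S ∪ T j) ∧ ∑ j ∈ range (n + 1), u j = d ∧
      ∑ j ∈ range (n + 1), l2norm (u j) ≤ (1 + tailConst p) * l2norm d := by
  set g : Fin n → ℝ := fun i => if i ∈ S then 0 else ‖d i‖
  obtain ⟨blk, hblk, hcard, htail⟩ :=
    exists_blocks_sum_sqrt_le hp0 hp1 hs (g := g) fun i => by dsimp only [g]; split_ifs <;> simp
  rw [Fintype.card_fin] at hblk htail
  -- the block `0` also receives the coordinates in `S`
  set blk' : Fin n → ℕ := fun i => if i ∈ S then 0 else blk i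
  set u : ℕ → Fin n → ℂ := fun j => restrict {i | blk' i = j} d
  refine ⟨fun j => {i | blk i = j}, u, hcard, fun j i hi => ?_, ?_, ?_⟩
  · by_contra h
    simp only [mem_union, mem_filter, mem_univ, true_and, not_or] at h
    simp [u, restrict, blk', h.1, h.2] at hi
  · ext i
    simp only [u, restrict, Finset.sum_apply, mem_filter, mem_univ, true_and, sum_ite_eq, mem_range]
    rw [if_pos]; have := hblk i; dsimp only [blk']; split_ifs <;> omega
  · have hgp : ∑ i, g i ^ p = ∑ i ∈ Sᶜ, ‖d i‖ ^ p := by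
      rw [← sum_add_sum_compl S, sum_eq_zero fun i hi => by simp [g, hi, Real.zero_rpow hp0.ne'],
        zero_add]
      exact sum_congr rfl fun i hi => by simp [g, mem_compl.1 hi]
    have hpiece : ∀ j, l2norm (u (j + 1)) = √(∑ i with blk i = j + 1, g i ^ 2) := fun j => by
      rw [l2norm_restrict, sum_filter, sum_filter]
      congr 1; refine sum_congr rfl fun i _ => ?_
      by_cases hi : i ∈ S <;> simp [blk', g, hi]
    calc ∑ j ∈ range (n + 1), l2norm (u j)
        = ∑ j ∈ range n, √(∑ i with blk i = j + 1, g i ^ 2) + l2norm (u 0) := by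
          simp only [sum_range_succ', hpiece]
      _ ≤ tailConst p * ((s : ℝ) ^ ((2 - p) / (2 * p)) * l2norm d) / s ^ ((2 - p) / (2 * p)) +
          l2norm d := by
          refine add_le_add (htail.trans ?_) (l2norm_restrict _ d ▸ sqrt_sum_norm_sq_le_l2norm _ d)
          rw [hgp]
          gcongr
          · exact tailConst_nonneg hp1
          · exact rpow_sum_compl_le_of_sum_compl_le hp0 hp1 hS hd
      _ = (1 + tailConst p) * l2norm d := by field_simp; ring

theorem herm_eq_inner (u v : Fin n → ℂ) :
    herm u v = inner ℂ (WithLp.toLp 2 u : EuclideanSpace ℂ (Fin n)) (WithLp.toLp 2 v) := by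
  simp [herm, PiLp.inner_apply, mul_comm]

def supportedOn (U : Finset (Fin n)) : Submodule ℂ (EuclideanSpace ℂ (Fin n)) where
  carrier := {v | ∀ i ∉ U, v i = 0}
  add_mem' hv hw i hi := by simp [hv i hi, hw i hi]
  zero_mem' _ _ := rfl
  smul_mem' c v hv i hi := by simp [hv i hi]

theorem sparse_of_mem_supportedOn {U : Finset (Fin n)} {t : ℕ} (hU : #U ≤ t)
    {v : EuclideanSpace ℂ (Fin n)} (hv : v ∈ supportedOn U) : Sparse t v.ofLp := by
  refine (card_le_card fun i hi => ?_).trans hU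
  by_contra h
  exact (mem_filter.1 hi).2 (hv i h)

end Vectors

section InnerProduct

variable {𝕜 E F : Type*} [RCLike 𝕜] [NormedAddCommGroup E] [InnerProductSpace 𝕜 E]
  [NormedAddCommGroup F] [InnerProductSpace 𝕜 F]

open RCLike in
theorem re_inner_sub_inner_le_of_abs_le (L : E →ₗ[𝕜] F) (V : Submodule 𝕜 E) {η δ : ℝ}
    (hL : ∀ w ∈ V, |‖w‖ ^ 2 - η * ‖L w‖ ^ 2| ≤ δ * ‖w‖ ^ 2) {u v : E} (hu : u ∈ V) (hv : v ∈ V) :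
    re (inner 𝕜 u v - η * inner 𝕜 (L u) (L v)) ≤ δ * ‖u‖ * ‖v‖ := by
  have half : ∀ u ∈ V, ∀ v ∈ V,
      re (inner 𝕜 u v - η * inner 𝕜 (L u) (L v)) ≤ δ / 2 * (‖u‖ ^ 2 + ‖v‖ ^ 2) := by
    intro u hu v hv
    have hadd := (abs_le.1 (hL _ (V.add_mem hu hv))).2
    have hsub := (abs_le.1 (hL _ (V.sub_mem hu hv))).1
    have hpar : δ * ‖u + v‖ ^ 2 + δ * ‖u - v‖ ^ 2 = 2 * δ * (‖u‖ ^ 2 + ‖v‖ ^ 2) := by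
      rw [← mul_add, parallelogram_law_with_norm 𝕜 u v]; ring
    rw [map_sub, re_ofReal_mul, re_inner_eq_norm_add_mul_self_sub_norm_sub_mul_self_div_four,
      re_inner_eq_norm_add_mul_self_sub_norm_sub_mul_self_div_four, ← map_add, ← map_sub]
    simp only [← sq]
    linarith
  -- rescaling `u` by `‖v‖` and `v` by `‖u‖` balances the two norms
  have hscale := half _ (V.smul_mem (‖v‖ : 𝕜) hu) _ (V.smul_mem (‖u‖ : 𝕜) hv)
  simp only [map_smul, inner_smul_left, inner_smul_right, conj_ofReal, norm_smul, norm_ofReal,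
    abs_norm] at hscale
  rw [show (‖u‖ : 𝕜) * (‖v‖ * inner 𝕜 u v) - η * (‖u‖ * (‖v‖ * inner 𝕜 (L u) (L v))) =
      ((‖u‖ * ‖v‖ : ℝ) : 𝕜) * (inner 𝕜 u v - η * inner 𝕜 (L u) (L v)) by push_cast; ring,
    re_ofReal_mul] at hscale
  rcases (mul_nonneg (norm_nonneg u) (norm_nonneg v)).eq_or_lt with h0 | hpos
  · rcases mul_eq_zero.1 h0.symm with h | h <;> simp [norm_eq_zero.1 h]
  · exact le_of_mul_le_mul_left (hscale.trans_eq (by ring)) hpos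

open RCLike in
theorem re_inner_sub_inner_sum_le (L : E →ₗ[𝕜] F) {η δ : ℝ} {ι κ : Type*} (s : Finset ι)
    (t : Finset κ) (u : ι → E) (v : κ → E)
    (h : ∀ j k, re (inner 𝕜 (u j) (v k) - η * inner 𝕜 (L (u j)) (L (v k))) ≤ δ * ‖u j‖ * ‖v k‖) :
    re (inner 𝕜 (∑ j ∈ s, u j) (∑ k ∈ t, v k) - η * inner 𝕜 (L (∑ j ∈ s, u j)) (L (∑ k ∈ t, v k))) ≤
      δ * (∑ j ∈ s, ‖u j‖) * ∑ k ∈ t, ‖v k‖ := by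
  have hexpand : inner 𝕜 (∑ j ∈ s, u j) (∑ k ∈ t, v k) -
      η * inner 𝕜 (L (∑ j ∈ s, u j)) (L (∑ k ∈ t, v k)) =
      ∑ j ∈ s, ∑ k ∈ t, (inner 𝕜 (u j) (v k) - η * inner 𝕜 (L (u j)) (L (v k))) := by
    simp only [map_sum, sum_inner, inner_sum, mul_sum, sum_sub_distrib]
    rw [sum_comm, sum_comm (s := t)]
  rw [hexpand, mul_assoc, sum_mul_sum, mul_sum]
  simp only [map_sum]
  exact sum_le_sum fun j _ => by
    rw [mul_sum]
    exact sum_le_sum fun k _ => (h j k).trans_eq (by ring)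

end InnerProduct

section Matrices

variable {m n : ℕ}

theorem toLp_mulVec (A : Matrix (Fin m) (Fin n) ℂ) (v : Fin n → ℂ) :
    (WithLp.toLp 2 (A.mulVec v) : EuclideanSpace ℂ (Fin m)) =
      Matrix.toEuclideanLin A (WithLp.toLp 2 v) := rfl

theorem re_herm_sub_herm_le_of_rip {t : ℕ} (A : Matrix (Fin m) (Fin n) ℂ) {α β η τ : ℝ}
    (hβ : 0 < β) (hβα : β ≤ α) (hη : 0 ≤ η) (hητ : |η * (α + β) / 2 - 1| ≤ τ)
    (hRIP : ∀ v : Fin n → ℂ, Sparse t v →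
      β * l2norm v ^ 2 ≤ l2norm (A.mulVec v) ^ 2 ∧ l2norm (A.mulVec v) ^ 2 ≤ α * l2norm v ^ 2)
    {U : Finset (Fin n)} (hU : #U ≤ t) {u v : Fin n → ℂ}
    (hu : ∀ i, u i ≠ 0 → i ∈ U) (hv : ∀ i, v i ≠ 0 → i ∈ U) :
    (herm u v - (η : ℂ) * herm (A.mulVec u) (A.mulVec v)).re ≤
      ((1 + τ) * ((α - β) / (α + β)) + τ) * l2norm u * l2norm v := by
  have hnear : ∀ w ∈ supportedOn U, |‖w‖ ^ 2 - η * ‖Matrix.toEuclideanLin A w‖ ^ 2| ≤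
      ((1 + τ) * ((α - β) / (α + β)) + τ) * ‖w‖ ^ 2 := by
    intro w hw
    obtain ⟨hlo, hhi⟩ := hRIP w.ofLp (sparse_of_mem_supportedOn hU hw)
    rw [l2norm_eq_norm, l2norm_eq_norm] at hlo hhi
    exact abs_sub_mul_le_of_bounds hβ hβα hη hητ (sq_nonneg _) hlo hhi
  rw [herm_eq_inner, herm_eq_inner, toLp_mulVec, toLp_mulVec, l2norm_eq_norm, l2norm_eq_norm]
  exact re_inner_sub_inner_le_of_abs_le _ _ hnear (fun i hi => by_contra fun h => hi (hu i h))
    (fun i hi => by_contra fun h => hi (hv i h))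

theorem re_herm_sub_herm_sum_le (A : Matrix (Fin m) (Fin n) ℂ) {η δ : ℝ} {ι κ : Type*}
    (s : Finset ι) (t : Finset κ) (u : ι → Fin n → ℂ) (v : κ → Fin n → ℂ)
    (h : ∀ j k, (herm (u j) (v k) - (η : ℂ) * herm (A.mulVec (u j)) (A.mulVec (v k))).re ≤
      δ * l2norm (u j) * l2norm (v k)) :
    (herm (∑ j ∈ s, u j) (∑ k ∈ t, v k) -
        (η : ℂ) * herm (A.mulVec (∑ j ∈ s, u j)) (A.mulVec (∑ k ∈ t, v k))).re ≤
      δ * (∑ j ∈ s, l2norm (u j)) * ∑ k ∈ t, l2norm (v k) := by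
  simp only [herm_eq_inner, toLp_mulVec, l2norm_eq_norm, WithLp.toLp_sum,
    ← RCLike.re_to_complex] at h ⊢
  exact re_inner_sub_inner_sum_le _ s t _ _ h

end Matrices

theorem iteration_invariant_bound_general
    {m n : ℕ} (p : ℝ) (hp0 : 0 < p) (hp1 : p ≤ 1)
    (s : ℕ) (hs : 1 ≤ s) (S : Finset (Fin n)) (hScard : S.card = s)
    (xperp x x' : Fin n → ℂ)
    (hsupp : ∀ i : Fin n, xperp i ≠ 0 → i ∈ S)
    (hfeas : lpPow p x ≤ lpPow p xperp)
    (hfeas' : lpPow p x' ≤ lpPow p xperp)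
    (A : Matrix (Fin m) (Fin n) ℂ) (α β : ℝ) (hβ : 0 < β) (hβα : β ≤ α)
    (hRIP : ∀ v : Fin n → ℂ, Sparse (3 * s) v →
      β * l2norm v ^ 2 ≤ l2norm (A.mulVec v) ^ 2 ∧
      l2norm (A.mulVec v) ^ 2 ≤ α * l2norm v ^ 2)
    (η τ : ℝ) (hη : 0 < η)
    (hητ : |η * (α + β) / 2 - 1| ≤ τ)
    (ρ : ℝ) (hρ : ρ = (α - β) / (α + β)) :
    (herm (x - xperp) (x' - xperp)
      - (η : ℂ) * herm (A.mulVec (x - xperp)) (A.mulVec (x' - xperp))).re ≤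
      ((1 + τ) * ρ + τ) *
        (1 + Real.sqrt (2 * p) * (2 / (2 - p)) ^ ((1 : ℝ) / 2 - 1 / p)) ^ 2 *
        l2norm (x - xperp) * l2norm (x' - xperp) := by
  subst hρ
  have hδ : 0 ≤ (1 + τ) * ((α - β) / (α + β)) + τ := by
    have : 0 ≤ (α - β) / (α + β) := div_nonneg (by linarith) (by linarith)
    have : 0 ≤ τ := (abs_nonneg _).trans hητ
    positivity
  obtain ⟨T, u, hT, hu, hsum, hnorm⟩ := exists_sparse_decomposition hp0 hp1 hs hScard.le
    (d := x - xperp) (sum_compl_rpow_norm_sub_le hp0 hp1 hsupp hfeas)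
  obtain ⟨T', u', hT', hu', hsum', hnorm'⟩ := exists_sparse_decomposition hp0 hp1 hs hScard.le
    (d := x' - xperp) (sum_compl_rpow_norm_sub_le hp0 hp1 hsupp hfeas')
  have hpair : ∀ j k, (herm (u j) (u' k) - (η : ℂ) * herm (A.mulVec (u j)) (A.mulVec (u' k))).re ≤
      ((1 + τ) * ((α - β) / (α + β)) + τ) * l2norm (u j) * l2norm (u' k) := fun j k =>
    re_herm_sub_herm_le_of_rip A hβ hβα hη.le hητ hRIP (U := S ∪ T j ∪ T' k)
      ((card_union_le _ _).trans (by linarith [card_union_le S (T j), hT j, hT' k]))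
      (fun i hi => mem_union_left _ (hu j i hi))
      (fun i hi => union_right_comm S (T j) (T' k) ▸ mem_union_left _ (hu' k i hi))
  calc _ = _ := by rw [← hsum, ← hsum']
    _ ≤ _ := re_herm_sub_herm_sum_le A _ _ u u' hpair
    _ ≤ ((1 + τ) * ((α - β) / (α + β)) + τ) * ((1 + tailConst p) * l2norm (x - xperp)) *
          ((1 + tailConst p) * l2norm (x' - xperp)) :=
        mul_le_mul (mul_le_mul_of_nonneg_left hnorm hδ) hnorm'
          (sum_nonneg fun k _ => l2norm_nonneg _)
          (mul_nonneg hδ (mul_nonneg (by linarith [tailConst_nonneg hp1]) (l2norm_nonneg _)))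
    _ = _ := by unfold tailConst; ring

theorem iteration_invariant_bound
    {m n : ℕ} (p : ℝ) (hp0 : 0 < p) (hp1 : p ≤ 1)
    (s : ℕ) (hs : 1 ≤ s) (S : Finset (Fin n)) (hScard : S.card = s)
    (xperp x x' : Fin n → ℂ)
    (hsupp : ∀ i : Fin n, xperp i ≠ 0 → i ∈ S)
    (hfeas : lpPow p x ≤ lpPow p xperp)
    (hfeas' : lpPow p x' ≤ lpPow p xperp)
    (A : Matrix (Fin m) (Fin n) ℂ) (α β : ℝ) (hβ : 0 < β) (hβα : β ≤ α)
    (hRIP : ∀ v : Fin n → ℂ, Sparse (3 * s) v →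
      β * l2norm v ^ 2 ≤ l2norm (A.mulVec v) ^ 2 ∧
      l2norm (A.mulVec v) ^ 2 ≤ α * l2norm v ^ 2)
    (η τ : ℝ) (hη : 0 < η) (hτ : 0 ≤ τ)
    (hητ : |η * (α + β) / 2 - 1| ≤ τ)
    (ρ : ℝ) (hρ : ρ = (α - β) / (α + β)) :
    (herm (x - xperp) (x' - xperp)
      - (η : ℂ) * herm (A.mulVec (x - xperp)) (A.mulVec (x' - xperp))).re ≤
      ((1 + τ) * ρ + τ) *
        (1 + Real.sqrt (2 * p) * (2 / (2 - p)) ^ ((1 : ℝ) / 2 - 1 / p)) ^ 2 *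
        l2norm (x - xperp) * l2norm (x' - xperp) :=
  iteration_invariant_bound_general p hp0 hp1 s hs S hScard xperp x x' hsupp hfeas hfeas' A α β hβ
    hβα hRIP η τ hη hητ ρ hρ
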